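/- Let θ > 0 and let (d_m)_{m∈ℕ} be a probability mass function on ℕ. Fix d ≥ 2 and α ∈ (0,∞)^d with |α| = θ, and suppose that for all x, y ∈ Δ_{d−1} the double series Σ_{m=0}^∞ d_m Σ_{n=0}^m (m_[n]/(θ+m)_(n)) |Q^α_n(x,y)| converges. Then for every n the series ρ_n := Σ_{m≥n} (m_[n]/(θ+m)_(n)) d_m converges, ρ_0 = 1, and Σ_{n=0}^∞ ρ_n Q^α_n(x,y) ≥ 0 for all x, y ∈ Δ_{d−1}. -/

import Mathlib

open MeasureTheory Finset

noncomputable section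

/-- Rising factorial `(a)_(n) = a (a+1) ⋯ (a+n−1)`. -/
def rf (a : ℝ) : ℕ → ℝ
  | 0 => 1
  | n + 1 => rf a n * (a + n)

/-- Falling factorial `N_[n] = N (N−1) ⋯ (N−n+1)` of a natural number, as a real. -/
def ff (N n : ℕ) : ℝ := (N.descFactorial n : ℝ)

/-- Triangular array `a^θ_{n,m}` (meaningful for `0 ≤ m ≤ n`). -/
def acoef (θ : ℝ) (n m : ℕ) : ℝ :=
  if n = 0 then 1
  else (θ + 2 * n - 1) * (-1 : ℝ) ^ (n - m) * rf (θ + m) (n - 1) /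
    ((m.factorial : ℝ) * ((n - m).factorial : ℝ))

/-- The simplex `Δ_{d−1} = {x ∈ [0,1]^d : x₁ + ⋯ + x_d = 1}`. -/
def simplex (d : ℕ) : Set (Fin d → ℝ) :=
  {x | (∀ i, 0 ≤ x i ∧ x i ≤ 1) ∧ ∑ i, x i = 1}

/-- `ξ^α_m(x,y)`. -/
def xiK {d : ℕ} (α : Fin d → ℝ) (m : ℕ) (x y : Fin d → ℝ) : ℝ :=
  ∑ l ∈ Finset.Nat.antidiagonalTuple d m,
    ((m.factorial : ℝ) / ∏ i, ((l i).factorial : ℝ)) *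
      (rf (∑ i, α i) m / ∏ i, rf (α i) (l i)) * ∏ i, (x i * y i) ^ l i

/-- Jacobi polynomial kernel `Q^α_n(x,y)`. -/
def Qker {d : ℕ} (α : Fin d → ℝ) (n : ℕ) (x y : Fin d → ℝ) : ℝ :=
  ∑ m ∈ Finset.range (n + 1), acoef (∑ i, α i) n m * xiK α m x y

/-- Dirichlet–multinomial pmf `DM_α(l; m)`. -/
def DM {d : ℕ} (α : Fin d → ℝ) (l : Fin d → ℕ) (m : ℕ) : ℝ :=
  ((m.factorial : ℝ) / ∏ i, ((l i).factorial : ℝ)) *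
    (∏ i, rf (α i) (l i)) / rf (∑ i, α i) m

/-- `ξ^{H,α}_m(r,s)`. -/
def xiH {d : ℕ} (α : Fin d → ℝ) (m : ℕ) (r s : Fin d → ℕ) : ℝ :=
  ∑ l ∈ Finset.Nat.antidiagonalTuple d m,
    DM (fun i => α i + r i) l m * DM (fun i => α i + s i) l m / DM α l m

/-- Hahn polynomial kernel `H^α_n(r,s)` for `|r| = |s| = N`. -/
def Hker {d : ℕ} (α : Fin d → ℝ) (N n : ℕ) (r s : Fin d → ℕ) : ℝ :=
  (rf ((∑ i, α i) + N) n / ff N n) *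
    ∑ m ∈ Finset.range (n + 1), acoef (∑ i, α i) n m * xiH α m r s

/-- `χ^{H,α}_m(r,s)`. -/
def chiH {d : ℕ} (α : Fin d → ℝ) (N m : ℕ) (r s : Fin d → ℕ) : ℝ :=
  ∑ l ∈ Finset.Nat.antidiagonalTuple d m,
    (1 / DM α l m) *
      (((m.factorial : ℝ) / ∏ i, ((l i).factorial : ℝ)) * (∏ i, ff (r i) (l i)) / ff N m) *
      (((m.factorial : ℝ) / ∏ i, ((l i).factorial : ℝ)) * (∏ i, ff (s i) (l i)) / ff N m)

/-- Normalized Jacobi polynomial `R_n^{a,b}` on `[0,1]`. -/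
def Rpoly (a b : ℝ) (n : ℕ) (x : ℝ) : ℝ :=
  ∑ k ∈ Finset.range (n + 1),
    (-1 : ℝ) ^ k * (n.choose k : ℝ) * (rf ((n : ℝ) + (a + b) - 1) k / rf b k) * (1 - x) ^ k

/-- `ζ_n^{a,b}`. -/
def zeta (a b : ℝ) (n : ℕ) : ℝ :=
  if n = 0 then 1
  else ((a + b) + 2 * n - 1) * rf (a + b) (n - 1) * rf b n / ((n.factorial : ℝ) * rf a n)

/-- Hahn polynomial `h_n^{a,b}(r; N)`. -/
def hahnPoly (a b : ℝ) (N n r : ℕ) : ℝ :=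
  ∑ k ∈ Finset.range (n + 1),
    (-1 : ℝ) ^ k * (n.choose k : ℝ) * rf ((n : ℝ) + (a + b) - 1) k * ff r k /
      (rf a k * ff N k)

/-- `u^{a,b}_{N,n}`. -/
def uCoef (a b : ℝ) (N n : ℕ) : ℝ :=
  if n = 0 then 1
  else (N.choose n : ℝ) * ((a + b) + 2 * n - 1) * rf (a + b) (n - 1) * rf a n /
    (rf ((a + b) + N) n * rf b n)

/-- Beta function `B(a,b) = Γ(a)Γ(b)/Γ(a+b)`. -/
def BetaFn (a b : ℝ) : ℝ := Real.Gamma a * Real.Gamma b / Real.Gamma (a + b)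

/-- Condition (G) on the parameter vector `α`. -/
def CondG {d : ℕ} (α : Fin d → ℝ) : Prop :=
  ∀ j : Fin d, 0 < (j : ℕ) →
    (α j ≤ ∑ i ∈ Finset.univ.filter fun i : Fin d => (i : ℕ) < (j : ℕ), α i) ∧
      (1 / 2 ≤ α j ∨ 2 ≤ ∑ i ∈ Finset.univ.filter fun i : Fin d => (i : ℕ) ≤ (j : ℕ), α i)

/-- Density of the Dirichlet distribution in the coordinates `(u₁, …, u_{d−1})`. -/
def dirichletDensity (k : ℕ) (α : Fin (k + 1) → ℝ) (u : Fin k → ℝ) : ℝ :=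
  if (∀ i, 0 < u i ∧ u i < 1) ∧ ∑ i, u i < 1 then
    (Real.Gamma (∑ i, α i) / ∏ i, Real.Gamma (α i)) *
      (∏ i : Fin k, u i ^ (α (Fin.castSucc i) - 1)) * (1 - ∑ i, u i) ^ (α (Fin.last k) - 1)
  else 0

/-- The Dirichlet probability measure `D_α` on `Δ_{d−1} ⊆ ℝ^d`, `d = k + 1`. -/
def dirichlet (k : ℕ) (α : Fin (k + 1) → ℝ) : Measure (Fin (k + 1) → ℝ) :=
  ((volume : Measure (Fin k → ℝ)).withDensity fun u =>
      ENNReal.ofReal (dirichletDensity k α u)).map fun u => Fin.snoc u (1 - ∑ i, u i)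

/-! The matrix `(m_[n] / (θ+m)_(n))_{n ≤ m}` is inverse to the lower-triangular array
`(a^θ_{n,m})`, which gives `ξ^α_m = ∑_{n ≤ m} (m_[n] / (θ+m)_(n)) Q^α_n`; the inverse relation
is a telescoping sum with an explicit closed form for its partial sums. Absolute convergence
lets one swap the two summations, so `∑_n ρ_n Q^α_n(x,y) = ∑_m d_m ξ^α_m(x,y)`, and every
`ξ^α_m(x,y)` is a sum of nonnegative terms. -/

open scoped Nat

lemma rf_zero (a : ℝ) : rf a 0 = 1 := rfl

lemma rf_succ (a : ℝ) (n : ℕ) : rf a (n + 1) = rf a n * (a + n) := rfl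

lemma rf_pos {a : ℝ} (ha : 0 < a) : ∀ n, 0 < rf a n
  | 0 => one_pos
  | n + 1 => mul_pos (rf_pos ha n) (by positivity)

lemma rf_nonneg {a : ℝ} (ha : 0 ≤ a) : ∀ n, 0 ≤ rf a n
  | 0 => zero_le_one
  | n + 1 => mul_nonneg (rf_nonneg ha n) (by positivity)

lemma ff_zero (N : ℕ) : ff N 0 = 1 := by simp [ff]

lemma ff_nonneg (N n : ℕ) : 0 ≤ ff N n := Nat.cast_nonneg _

lemma ff_self (N : ℕ) : ff N N = N ! := by simp [ff, Nat.descFactorial_self]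

lemma ff_eq_zero_of_lt {N n : ℕ} (h : N < n) : ff N n = 0 := by
  simp [ff, Nat.descFactorial_eq_zero_iff_lt.mpr h]

lemma ff_succ (N n : ℕ) : ff N (n + 1) = ((N : ℝ) - n) * ff N n := by
  rcases lt_trichotomy n N with h | rfl | h
  · simp only [ff, Nat.descFactorial_succ]
    push_cast [Nat.cast_sub h.le]
    ring
  · simp [ff_eq_zero_of_lt (Nat.lt_succ_self n)]
  · rw [ff_eq_zero_of_lt h, ff_eq_zero_of_lt (h.trans (Nat.lt_succ_self n)), mul_zero]

lemma ff_le_rf {θ : ℝ} (hθ : 0 ≤ θ) (N : ℕ) : ∀ n, ff N n ≤ rf (θ + N) n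
  | 0 => by rw [ff_zero, rf_zero]
  | n + 1 => by
    rw [ff_succ, rf_succ, mul_comm (rf _ n)]
    calc ((N : ℝ) - n) * ff N n ≤ (θ + N + n) * ff N n :=
          mul_le_mul_of_nonneg_right (by linarith [(n.cast_nonneg : (0 : ℝ) ≤ n)]) (ff_nonneg N n)
      _ ≤ (θ + N + n) * rf (θ + N) n :=
          mul_le_mul_of_nonneg_left (ff_le_rf hθ N n) (by positivity)

lemma ff_div_rf_nonneg {θ : ℝ} (hθ : 0 ≤ θ) (m n : ℕ) : 0 ≤ ff m n / rf (θ + m) n :=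
  div_nonneg (ff_nonneg m n) (rf_nonneg (by positivity) n)

lemma ff_div_rf_le_one {θ : ℝ} (hθ : 0 ≤ θ) (m n : ℕ) : ff m n / rf (θ + m) n ≤ 1 :=
  div_le_one_of_le₀ (ff_le_rf hθ m n) (rf_nonneg (by positivity) n)

lemma acoef_self (θ : ℝ) (q : ℕ) : acoef θ q q = rf (θ + q) q / q ! := by
  cases q with
  | zero => simp [acoef, rf]
  | succ k =>
    rw [acoef, if_neg k.succ_ne_zero, Nat.sub_self, Nat.add_sub_cancel, rf_succ]
    push_cast
    ring

lemma sum_range_ff_div_rf_mul_acoef {θ : ℝ} (hθ : 0 < θ) {m q : ℕ} (hqm : q < m) (k : ℕ) :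
    ∑ j ∈ range (k + 1), ff m (q + j) / rf (θ + m) (q + j) * acoef θ (q + j) q =
      (-1) ^ k * ff m (q + 1 + k) * rf (θ + q) (q + k) /
        (((m : ℝ) - q) * rf (θ + m) (q + k) * k ! * q !) := by
  have hmq : (m : ℝ) - q ≠ 0 := sub_ne_zero.mpr (by exact_mod_cast hqm.ne')
  have hq := q.factorial_ne_zero
  induction k with
  | zero =>
    have hrf := (rf_pos (by positivity : 0 < θ + m) q).ne'
    rw [sum_range_one, Nat.add_zero, Nat.add_zero, acoef_self, ff_succ, pow_zero,
      Nat.factorial_zero, Nat.cast_one]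
    field_simp
  | succ k ih =>
    have hrf := (rf_pos (by positivity : 0 < θ + m) (q + k)).ne'
    have hD : θ + m + (q + k : ℕ) ≠ 0 := by positivity
    have hk := k.factorial_ne_zero
    rw [sum_range_succ, ih, acoef, if_neg (by omega), show q + (k + 1) - 1 = q + k by omega,
      show q + (k + 1) - q = k + 1 by omega, show q + 1 + (k + 1) = q + k + 1 + 1 by omega,
      show q + 1 + k = q + k + 1 by omega, ← add_assoc, ff_succ m (q + k + 1), rf_succ,
      rf_succ, Nat.factorial_succ]
    push_cast at *
    field_simp
    ring

lemma sum_Ico_ff_div_rf_mul_acoef {θ : ℝ} (hθ : 0 < θ) {m q : ℕ} (hqm : q ≤ m) :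
    ∑ n ∈ Ico q (m + 1), ff m n / rf (θ + m) n * acoef θ n q = if q = m then 1 else 0 := by
  rcases hqm.eq_or_lt with rfl | hqm
  · have hrf := (rf_pos (by positivity : 0 < θ + q) q).ne'
    rw [Nat.Ico_succ_singleton, sum_singleton, acoef_self, ff_self, if_pos rfl]
    field_simp
  · rw [sum_Ico_eq_sum_range, show m + 1 - q = m - q + 1 by omega,
      sum_range_ff_div_rf_mul_acoef hθ hqm, show q + 1 + (m - q) = m + 1 by omega,
      ff_eq_zero_of_lt m.lt_succ_self, if_neg hqm.ne]
    simp

lemma sum_range_ff_div_rf_mul_Qker {d : ℕ} {α : Fin d → ℝ} (hα : 0 < ∑ i, α i) (m : ℕ)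
    (x y : Fin d → ℝ) :
    ∑ n ∈ range (m + 1), ff m n / rf (∑ i, α i + m) n * Qker α n x y = xiK α m x y := by
  simp only [Qker, mul_sum, range_eq_Ico]
  rw [← sum_Ico_Ico_comm]
  calc ∑ q ∈ Ico 0 (m + 1), ∑ n ∈ Ico q (m + 1),
          ff m n / rf (∑ i, α i + m) n * (acoef (∑ i, α i) n q * xiK α q x y)
      = ∑ q ∈ Ico 0 (m + 1), (if q = m then 1 else 0) * xiK α q x y := by
        refine sum_congr rfl fun q hq => ?_
        rw [← sum_Ico_ff_div_rf_mul_acoef hα (Nat.lt_succ_iff.mp (mem_Ico.mp hq).2), sum_mul]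
        exact sum_congr rfl fun n _ => by ring
    _ = xiK α m x y := by simp

lemma xiK_nonneg {d : ℕ} {α : Fin d → ℝ} (hα : ∀ i, 0 ≤ α i) (m : ℕ) {x y : Fin d → ℝ}
    (hx : ∀ i, 0 ≤ x i) (hy : ∀ i, 0 ≤ y i) : 0 ≤ xiK α m x y := by
  have hrf : ∀ i k, 0 ≤ rf (α i) k := fun i => rf_nonneg (hα i)
  refine sum_nonneg fun l _ => mul_nonneg (mul_nonneg ?_ ?_) ?_
  · exact div_nonneg (Nat.cast_nonneg _) (prod_nonneg fun i _ => Nat.cast_nonneg _)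
  · exact div_nonneg (rf_nonneg (sum_nonneg fun i _ => hα i) m)
      (prod_nonneg fun i _ => hrf i _)
  · exact prod_nonneg fun i _ => pow_nonneg (mul_nonneg (hx i) (hy i)) _

lemma tsum_tsum_mul_eq_tsum_mul_sum_range {c : ℕ → ℕ → ℝ} {w Q : ℕ → ℝ}
    (hc : ∀ m n, 0 ≤ c m n) (hc_zero : ∀ m n, m < n → c m n = 0) (hw : ∀ m, 0 ≤ w m)
    (h : Summable fun m => w m * ∑ n ∈ range (m + 1), c m n * |Q n|) :
    ∑' n, (∑' m, c m n * w m) * Q n = ∑' m, w m * ∑ n ∈ range (m + 1), c m n * Q n := by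
  have hc_zero' : ∀ m n, n ∉ range (m + 1) → c m n = 0 := fun m n hn =>
    hc_zero m n (by simpa using hn)
  have habs : Summable fun p : ℕ × ℕ => |c p.1 p.2 * w p.1 * Q p.2| := by
    refine (summable_prod_of_nonneg fun _ => abs_nonneg _).mpr ⟨fun m => ?_, ?_⟩
    · refine summable_of_ne_finset_zero (s := range (m + 1)) fun n hn => ?_
      simp [hc_zero' m n hn]
    · refine h.congr fun m => ?_
      rw [tsum_eq_sum fun n hn => by simp [hc_zero' m n hn], mul_sum]
      refine sum_congr rfl fun n _ => ?_
      rw [abs_mul, abs_mul, abs_of_nonneg (hc m n), abs_of_nonneg (hw m)]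
      ring
  have hsum : Summable (Function.uncurry fun n m => c m n * w m * Q n) :=
    ((Equiv.prodComm ℕ ℕ).summable_iff.mpr habs).of_abs
  calc ∑' n, (∑' m, c m n * w m) * Q n = ∑' n, ∑' m, c m n * w m * Q n :=
        tsum_congr fun n => tsum_mul_right.symm
    _ = ∑' m, ∑' n, c m n * w m * Q n := hsum.tsum_comm.symm
    _ = ∑' m, w m * ∑ n ∈ range (m + 1), c m n * Q n := by
        refine tsum_congr fun m => ?_
        rw [tsum_eq_sum fun n hn => by simp [hc_zero' m n hn], mul_sum]
        exact sum_congr rfl fun n _ => by ring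

theorem stmt_17_general (θ : ℝ) (hθ : 0 < θ) (w : ℕ → ℝ) (hw0 : ∀ m, 0 ≤ w m)
    (hw1 : HasSum w 1)
    (d : ℕ) (α : Fin d → ℝ) (hα : ∀ i, 0 < α i) (hαθ : ∑ i, α i = θ)
    (hconv : ∀ x ∈ simplex d, ∀ y ∈ simplex d,
      Summable fun m => w m *
        ∑ n ∈ Finset.range (m + 1), (ff m n / rf (θ + m) n) * |Qker α n x y|) :
    (∀ n : ℕ, Summable fun m => (ff m n / rf (θ + m) n) * w m) ∧
      (∑' m, (ff m 0 / rf (θ + m) 0) * w m) = 1 ∧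
      (∀ x ∈ simplex d, ∀ y ∈ simplex d,
        0 ≤ ∑' n, (∑' m, (ff m n / rf (θ + m) n) * w m) * Qker α n x y) := by
  subst hαθ
  refine ⟨fun n => ?_, ?_, fun x hx y hy => ?_⟩
  · exact hw1.summable.of_nonneg_of_le (fun m => mul_nonneg (ff_div_rf_nonneg hθ.le m n) (hw0 m))
      fun m => mul_le_of_le_one_left (hw0 m) (ff_div_rf_le_one hθ.le m n)
  · simpa only [ff_zero, rf_zero, div_one, one_mul] using hw1.tsum_eq
  · rw [tsum_tsum_mul_eq_tsum_mul_sum_range (ff_div_rf_nonneg hθ.le)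
      (fun m n h => by rw [ff_eq_zero_of_lt h, zero_div]) hw0 (hconv x hx y hy)]
    simp_rw [sum_range_ff_div_rf_mul_Qker hθ]
    exact tsum_nonneg fun m => mul_nonneg (hw0 m)
      (xiK_nonneg (fun i => (hα i).le) m (fun i => (hx.1 i).1) fun i => (hy.1 i).1)

/-- probability mass functions on ℕ generate Jacobi positive-definite
sequences, for every dimension and every `α` with `|α| = θ`. -/
theorem stmt_17 (θ : ℝ) (hθ : 0 < θ) (w : ℕ → ℝ) (hw0 : ∀ m, 0 ≤ w m)
    (hw1 : HasSum w 1)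
    (d : ℕ) (hd : 2 ≤ d) (α : Fin d → ℝ) (hα : ∀ i, 0 < α i) (hαθ : ∑ i, α i = θ)
    (hconv : ∀ x ∈ simplex d, ∀ y ∈ simplex d,
      Summable fun m => w m *
        ∑ n ∈ Finset.range (m + 1), (ff m n / rf (θ + m) n) * |Qker α n x y|) :
    (∀ n : ℕ, Summable fun m => (ff m n / rf (θ + m) n) * w m) ∧
      (∑' m, (ff m 0 / rf (θ + m) 0) * w m) = 1 ∧
      (∀ x ∈ simplex d, ∀ y ∈ simplex d,
        0 ≤ ∑' n, (∑' m, (ff m n / rf (θ + m) n) * w m) * Qker α n x y) :=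
  stmt_17_general θ hθ w hw0 hw1 d α hα hαθ hconv
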